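/- (Lower bound for locally pan-private counting) For any ε-locally pan-private client-side algorithm with finite state spaces, given by per-step updates State_t and an output map Out, there exist input streams x (all zeros) and x' (a single 1) in {0,1}^T such that TV(Out(State(x)), Out(State(x'))) ≤ (1-2p)/√(4p(1-p)T) with p = 1/(e^ε+1); in particular this bound is O((e^ε-1)/√(T e^ε)). -/

import Mathlib

/-!
Fix a trajectory `σ`. As a function of the stream `x` its probability is a product
`∏ t, f t (x t)` of per-step weights, so pan-privacy between the two streams that pick, at every
step, the larger resp. the smaller of `f t true` and `f t false` bounds the total absolute
log-likelihood ratio `∑ t, |log (f t true / f t false)|` by `ε`. By convexity of `exp` this caps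
the total positive part of the likelihood changes caused by the `T` one-hot streams; both laws
having mass one, the signed changes cancel after summing over `σ`, which leaves
`∑ t, TV(P(0), P(e_t)) ≤ (e^ε - 1) ε / (e^ε - 1 + ε)`. Post-processing by `Out` does not increase
total variation, so the best `t₀` does at most `1 / T` of this, which is below the stated
`O(1 / √T)` bound for `T ≥ 2`.
-/

open Real

/-- Probability that a streaming algorithm with per-step (randomized) state-update
kernels `St t x s s' = Pr[State_t(x; s) = s']`, run from initial state `s0` on the
input stream `x`, produces the state trajectory `σ = (s_1, …, s_T)`. -/
noncomputable def trajProb {S : Type} (T : ℕ) (St : ℕ → Bool → S → S → ℝ)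
    (s0 : S) (x : Fin T → Bool) (σ : Fin T → S) : ℝ :=
  ∏ t : Fin T,
    St t (x t)
      (if (t : ℕ) = 0 then s0
       else σ ⟨(t : ℕ) - 1, lt_of_le_of_lt (Nat.sub_le _ _) t.isLt⟩)
      (σ t)

/-- Total variation distance between two distributions on a finite type. -/
noncomputable def tvFin {O : Type} [Fintype O] (f g : O → ℝ) : ℝ :=
  (1 / 2) * ∑ o, |f o - g o|

section TotalVariation

variable {α O : Type} [Fintype α] [Fintype O]

theorem tvFin_eq_sum_max_sub {f g : α → ℝ} (h : ∑ a, f a = ∑ a, g a) :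
    tvFin f g = ∑ a, max (g a - f a) 0 := by
  have habs : ∀ a, |f a - g a| = 2 * max (g a - f a) 0 - (g a - f a) := fun a => by
    rcases le_total (f a) (g a) with h | h
    · rw [abs_of_nonpos (by linarith), max_eq_left (by linarith)]; ring
    · rw [abs_of_nonneg (by linarith), max_eq_right (by linarith)]; ring
  rw [tvFin, Finset.sum_congr rfl fun a _ => habs a, Finset.sum_sub_distrib, ← Finset.mul_sum,
    Finset.sum_sub_distrib, h]
  ring

theorem tvFin_comp_le (f g : α → ℝ) {K : α → O → ℝ} (hK0 : ∀ a o, 0 ≤ K a o)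
    (hK1 : ∀ a, ∑ o, K a o = 1) :
    tvFin (fun o => ∑ a, f a * K a o) (fun o => ∑ a, g a * K a o) ≤ tvFin f g := by
  unfold tvFin
  gcongr
  calc ∑ o, |∑ a, f a * K a o - ∑ a, g a * K a o|
      ≤ ∑ o, ∑ a, |f a - g a| * K a o := by
        gcongr with o
        rw [← Finset.sum_sub_distrib]
        refine (Finset.abs_sum_le_sum_abs _ _).trans_eq (Finset.sum_congr rfl fun a _ => ?_)
        rw [← sub_mul, abs_mul, abs_of_nonneg (hK0 a o)]
    _ = ∑ a, |f a - g a| := by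
        rw [Finset.sum_comm]
        simp_rw [← Finset.mul_sum, hK1, mul_one]

end TotalVariation

theorem mul_max_sub_one_le {ε r : ℝ} (hε : 0 < ε) (hr : 0 < r) (hlog : |log r| ≤ ε) :
    (exp ε - 1 + ε) * max (r - 1) 0 ≤ (exp ε - 1) * (|log r| + (r - 1)) := by
  have hE : 0 ≤ exp ε - 1 := by linarith [add_one_le_exp ε]
  rcases le_or_gt r 1 with h1 | h1
  · have : 0 ≤ -log r + (r - 1) := by linarith [log_le_sub_one_of_pos hr]
    rw [max_eq_right (by linarith), abs_of_nonpos (log_nonpos hr.le h1)]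
    simpa using mul_nonneg hE this
  · have hl : 0 < log r := log_pos h1
    -- the secant slope of `exp` from `0` grows from `log r` to `ε`
    have hsec := convexOn_exp.secant_mono (Set.mem_univ 0) (Set.mem_univ (log r))
      (Set.mem_univ ε) hl.ne' hε.ne' (le_of_abs_le hlog)
    rw [exp_zero, sub_zero, sub_zero, exp_log hr, div_le_div_iff₀ hl hε] at hsec
    rw [max_eq_left (by linarith), abs_of_pos hl]
    nlinarith

def oneHot {ι : Type} [DecidableEq ι] (t₀ : ι) : ι → Bool := fun t => if t = t₀ then true else false

section ProductWeights

variable {ι : Type} [Fintype ι] {ε : ℝ} (f : ι → Bool → ℝ)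

theorem sum_abs_log_div_le (hf : ∀ t b, 0 < f t b)
    (hpriv : ∀ x x' : ι → Bool, ∏ t, f t (x t) ≤ exp ε * ∏ t, f t (x' t)) :
    ∑ t, |log (f t true / f t false)| ≤ ε := by
  let up : ι → Bool := fun t => decide (f t false ≤ f t true)
  have hlog := log_le_log (Finset.prod_pos fun t _ => hf t _) (hpriv up fun t => !up t)
  rw [log_mul (exp_pos ε).ne' (Finset.prod_ne_zero_iff.2 fun t _ => (hf t _).ne'), log_exp,
    log_prod fun t _ => (hf t _).ne', log_prod fun t _ => (hf t _).ne'] at hlog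
  calc ∑ t, |log (f t true / f t false)| = ∑ t, (log (f t (up t)) - log (f t (!up t))) := by
        refine Finset.sum_congr rfl fun t _ => ?_
        rw [log_div (hf t _).ne' (hf t _).ne']
        by_cases h : f t false ≤ f t true
        · simp only [up, h, decide_true, Bool.not_true]
          exact abs_of_nonneg (sub_nonneg.2 (log_le_log (hf t _) h))
        · simp only [up, h, decide_false, Bool.not_false]
          rw [abs_of_neg (sub_neg.2 (log_lt_log (hf t _) (not_le.1 h))), neg_sub]
    _ ≤ ε := by rw [Finset.sum_sub_distrib]; linarith

variable [DecidableEq ι]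

theorem prod_oneHot_mul {M : Type} [CommMonoid M] (g : ι → Bool → M) (t : ι) :
    (∏ u, g u (oneHot t u)) * g t false = (∏ u, g u false) * g t true := by
  rw [Fintype.prod_eq_mul_prod_compl t, Fintype.prod_eq_mul_prod_compl t (fun u => g u false)]
  have : ∀ u ∈ ({t}ᶜ : Finset ι), g u (oneHot t u) = g u false := fun u hu => by
    simp [oneHot, Finset.notMem_singleton.1 (Finset.mem_compl.1 hu)]
  rw [Finset.prod_congr rfl this]
  simp only [oneHot, if_true]
  ac_rfl

theorem sum_max_prod_oneHot_sub_le (hf : ∀ t b, 0 ≤ f t b) (hε : 0 < ε)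
    (hpriv : ∀ x x' : ι → Bool, ∏ t, f t (x t) ≤ exp ε * ∏ t, f t (x' t)) :
    (exp ε - 1 + ε) * ∑ t, max (∏ u, f u (oneHot t u) - ∏ u, f u false) 0 ≤
      (exp ε - 1) * (ε * ∏ u, f u false + ∑ t, (∏ u, f u (oneHot t u) - ∏ u, f u false)) := by
  rcases (Finset.prod_nonneg fun u _ => hf u false : 0 ≤ ∏ u, f u false).eq_or_lt with h0 | h0
  · have hzero : ∀ t, ∏ u, f u (oneHot t u) = 0 := fun t =>
      le_antisymm (by simpa [← h0] using hpriv (oneHot t) fun _ => false)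
        (Finset.prod_nonneg fun u _ => hf u _)
    simp [hzero, ← h0]
  set P₀ := ∏ u, f u false
  have hpos : ∀ t b, 0 < f t b := by
    have hP : ∀ x : ι → Bool, 0 < ∏ t, f t (x t) := fun x =>
      (mul_pos_iff_of_pos_left (exp_pos ε)).1 (h0.trans_le (hpriv _ x))
    intro t b
    exact (hf t b).lt_of_ne' (Finset.prod_ne_zero_iff.1 (hP fun _ => b).ne' t (Finset.mem_univ t))
  have hsingle : ∀ t, ∏ u, f u (oneHot t u) - P₀ = P₀ * (f t true / f t false - 1) := fun t => by
    rw [mul_sub, mul_one, ← mul_div_assoc, ← prod_oneHot_mul,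
      mul_div_cancel_right₀ _ (hpos t false).ne']
  have hmax : ∀ y, max (P₀ * y) 0 = P₀ * max y 0 := fun y => by
    rw [mul_max_of_nonneg _ _ h0.le, mul_zero]
  have hbudget := sum_abs_log_div_le f hpos hpriv
  simp_rw [hsingle, hmax, ← Finset.mul_sum]
  calc (exp ε - 1 + ε) * (P₀ * ∑ t, max (f t true / f t false - 1) 0)
      ≤ P₀ * ∑ t, (exp ε - 1) * (|log (f t true / f t false)| + (f t true / f t false - 1)) := by
        rw [mul_left_comm, Finset.mul_sum]
        refine mul_le_mul_of_nonneg_left (Finset.sum_le_sum fun t _ => ?_) h0.le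
        exact mul_max_sub_one_le hε (div_pos (hpos t true) (hpos t false))
          ((Finset.single_le_sum (fun u _ => abs_nonneg _) (Finset.mem_univ t)).trans hbudget)
    _ ≤ (exp ε - 1) * (ε * P₀ + P₀ * ∑ t, (f t true / f t false - 1)) := by
        rw [← Finset.mul_sum, Finset.sum_add_distrib]
        have : 0 ≤ exp ε - 1 := by linarith [add_one_le_exp ε]
        nlinarith [mul_le_mul_of_nonneg_left hbudget (mul_nonneg h0.le this)]

end ProductWeights

section Trajectory

variable {S : Type} (St : ℕ → Bool → S → S → ℝ) (s0 : S)

-- `Fin.cons s0 σ` is the whole trajectory `(s₀, …, s_T)`: step `t` goes from index `t` to `t + 1`.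
theorem trajProb_eq_prod (T : ℕ) (x : Fin T → Bool) (σ : Fin T → S) :
    trajProb T St s0 x σ =
      ∏ t : Fin T, St t (x t) ((Fin.cons s0 σ : Fin (T + 1) → S) t.castSucc) (σ t) := by
  refine Finset.prod_congr rfl fun ⟨t, ht⟩ _ => ?_
  rcases t with _ | t
  · rfl
  · exact congrArg (St _ _ · _) (Fin.cons_succ (α := fun _ => S) s0 σ ⟨t, by omega⟩).symm

theorem trajProb_snoc (n : ℕ) (x : Fin (n + 1) → Bool) (σ : Fin n → S) (s : S) :
    trajProb (n + 1) St s0 x (Fin.snoc σ s) =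
      trajProb n St s0 (Fin.init x) σ *
        St n (x (Fin.last n)) ((Fin.cons s0 σ : Fin (n + 1) → S) (Fin.last n)) s := by
  simp [trajProb_eq_prod, Fin.prod_univ_castSucc, Fin.cons_snoc_eq_snoc_cons, Fin.init]

variable [Fintype S]

theorem sum_trajProb (hSt1 : ∀ n b s, ∑ s', St n b s s' = 1) (T : ℕ) (x : Fin T → Bool) :
    ∑ σ, trajProb T St s0 x σ = 1 := by
  induction T with
  | zero => simp [trajProb]
  | succ n ih =>
    rw [← (Fin.snocEquiv fun _ => S).sum_comp, Fintype.sum_prod_type, Finset.sum_comm]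
    simp only [Fin.snocEquiv, Equiv.coe_fn_mk, trajProb_snoc, ← Finset.mul_sum, hSt1, mul_one, ih]

theorem sum_tvFin_trajProb_oneHot_le {T : ℕ} {ε : ℝ} (hε : 0 < ε)
    (hSt0 : ∀ n b s s', 0 ≤ St n b s s') (hSt1 : ∀ n b s, ∑ s', St n b s s' = 1)
    (hPan : ∀ (x x' : Fin T → Bool) (σ : Fin T → S),
      trajProb T St s0 x σ ≤ exp ε * trajProb T St s0 x' σ) :
    ∑ t, tvFin (trajProb T St s0 fun _ => false) (trajProb T St s0 (oneHot t)) ≤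
      (exp ε - 1) * ε / (exp ε - 1 + ε) := by
  have hmass := sum_trajProb St s0 hSt1 T
  rw [le_div_iff₀ (by linarith [add_one_le_exp ε]),
    Finset.sum_congr rfl fun t _ => tvFin_eq_sum_max_sub (by rw [hmass, hmass]),
    Finset.sum_comm, Finset.sum_mul]
  calc ∑ σ, (∑ t, max (trajProb T St s0 (oneHot t) σ - trajProb T St s0 (fun _ => false) σ) 0) *
        (exp ε - 1 + ε)
      ≤ ∑ σ, (exp ε - 1) * (ε * trajProb T St s0 (fun _ => false) σ +
          ∑ t, (trajProb T St s0 (oneHot t) σ - trajProb T St s0 (fun _ => false) σ)) := by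
        refine Finset.sum_le_sum fun σ _ => ?_
        let f : Fin T → Bool → ℝ := fun t b =>
          St t b ((Fin.cons s0 σ : Fin (T + 1) → S) t.castSucc) (σ t)
        have hf (x) : trajProb T St s0 x σ = ∏ t, f t (x t) := trajProb_eq_prod St s0 T x σ
        simp only [hf]
        rw [mul_comm]
        exact sum_max_prod_oneHot_sub_le f (fun _ _ => hSt0 _ _ _ _) hε fun x x' => by
          rw [← hf, ← hf]; exact hPan x x' σ
    _ = (exp ε - 1) * ε := by
        rw [← Finset.mul_sum, Finset.sum_add_distrib, ← Finset.mul_sum, Finset.sum_comm]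
        simp [Finset.sum_sub_distrib, hmass]

end Trajectory

-- As a function of `y = exp ε`, `(y - 1 + ε)² - 2 y ε²` is increasing for `y ≥ q`, the degree-5
-- Taylor polynomial of `exp` at `ε`, so it suffices to check the inequality at `y = q`.
theorem two_mul_exp_mul_sq_le {ε : ℝ} (hε : 0 ≤ ε) : 2 * exp ε * ε ^ 2 ≤ (exp ε - 1 + ε) ^ 2 := by
  obtain ⟨q, hq, hqexp⟩ : ∃ q, q = 1 + ε + ε ^ 2 / 2 + ε ^ 3 / 6 + ε ^ 4 / 24 + ε ^ 5 / 120 ∧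
      q ≤ exp ε := by
    refine ⟨_, rfl, ?_⟩
    have h := sum_le_exp_of_nonneg hε 6
    simp only [Finset.sum_range_succ, Finset.sum_range_zero, Nat.factorial] at h
    norm_num at h
    linarith
  have hpoly : 2 * q * ε ^ 2 ≤ (q - 1 + ε) ^ 2 := by
    subst hq
    nlinarith [pow_nonneg hε 3, pow_nonneg hε 4, pow_nonneg hε 5, pow_nonneg hε 6,
      pow_nonneg hε 7, mul_nonneg hε (sq_nonneg (ε - 2)),
      mul_nonneg (pow_nonneg hε 3) (sq_nonneg (ε - 2))]
  have hfactor : 0 ≤ exp ε + q - 2 + 2 * ε - 2 * ε ^ 2 := by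
    subst hq
    nlinarith [pow_nonneg hε 3, pow_nonneg hε 4, pow_nonneg hε 5, mul_nonneg hε (sq_nonneg (ε - 2))]
  nlinarith [mul_nonneg (sub_nonneg.2 hqexp) hfactor]

theorem div_le_one_sub_two_mul_div_sqrt {ε T p : ℝ} (hε : 0 < ε) (hT : 2 ≤ T)
    (hp : p = 1 / (exp ε + 1)) :
    (exp ε - 1) * ε / (exp ε - 1 + ε) / T ≤ (1 - 2 * p) / √(4 * p * (1 - p) * T) := by
  have hE : 1 < exp ε := one_lt_exp_iff.2 hε
  have hp' : p * (exp ε + 1) = 1 := by rw [hp]; field_simp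
  have hp0 : 0 < p := by rw [hp]; positivity
  have hp1 : 1 - 2 * p = p * (exp ε - 1) := by linear_combination -hp'
  have hD : 4 * p * (1 - p) * T = 4 * p ^ 2 * exp ε * T := by linear_combination -4 * p * T * hp'
  have hX : 0 ≤ (exp ε - 1) * ε / (exp ε - 1 + ε) / T := by
    have := hε.le; have := hE.le; positivity
  rw [le_div_iff₀ (sqrt_pos.2 (by rw [hD]; positivity)),
    ← pow_le_pow_iff_left₀ (by positivity) (by rw [hp1]; nlinarith) two_ne_zero,
    mul_pow, sq_sqrt (by rw [hD]; positivity), hD, hp1]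
  have key := two_mul_exp_mul_sq_le hε.le
  rw [div_div, div_pow, div_mul_eq_mul_div, div_le_iff₀ (by positivity)]
  have : 0 ≤ (exp ε - 1 + ε) ^ 2 * T - 4 * exp ε * ε ^ 2 := by nlinarith
  nlinarith [mul_nonneg (mul_nonneg (sq_nonneg p) (sq_nonneg (exp ε - 1)))
    (mul_nonneg this (by linarith : (0:ℝ) ≤ T))]

/-- Lower bound for locally pan-private counting: for any `ε`-locally pan-private
client-side algorithm (per-step update kernels `St` and randomized output map `Out`
applied to the state trajectory), there is a stream `x'` with a single `1` such that
the output distributions on the all-zeros stream and on `x'` are at total variation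
distance at most `(1-2p)/√(4p(1-p)T)` where `p = 1/(e^ε+1)`. -/
theorem stmt16 {S O : Type} [Fintype S] [Fintype O] (T : ℕ) (hT : 2 ≤ T)
    (ε : ℝ) (hε : 0 < ε)
    (St : ℕ → Bool → S → S → ℝ) (s0 : S)
    (hSt0 : ∀ t x s s', 0 ≤ St t x s s')
    (hSt1 : ∀ t x s, ∑ s', St t x s s' = 1)
    (hPan : ∀ (x x' : Fin T → Bool) (σ : Fin T → S),
      trajProb T St s0 x σ ≤ exp ε * trajProb T St s0 x' σ)
    (Out : (Fin T → S) → O → ℝ)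
    (hOut0 : ∀ σ o, 0 ≤ Out σ o) (hOut1 : ∀ σ, ∑ o, Out σ o = 1) :
    let outDist : (Fin T → Bool) → O → ℝ := fun x o =>
      ∑ σ : Fin T → S, trajProb T St s0 x σ * Out σ o
    let p : ℝ := 1 / (exp ε + 1)
    ∃ t0 : Fin T,
      tvFin (outDist fun _ => false)
          (outDist fun t => if t = t0 then true else false) ≤
        (1 - 2 * p) / Real.sqrt (4 * p * (1 - p) * T) := by
  intro outDist p
  have havg : ∑ t, tvFin (outDist fun _ => false) (outDist (oneHot t)) ≤
      ∑ _t : Fin T, (exp ε - 1) * ε / (exp ε - 1 + ε) / T := by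
    calc ∑ t, tvFin (outDist fun _ => false) (outDist (oneHot t))
        ≤ ∑ t, tvFin (trajProb T St s0 fun _ => false) (trajProb T St s0 (oneHot t)) :=
          Finset.sum_le_sum fun t _ => tvFin_comp_le _ _ hOut0 hOut1
      _ ≤ (exp ε - 1) * ε / (exp ε - 1 + ε) :=
          sum_tvFin_trajProb_oneHot_le St s0 hε hSt0 hSt1 hPan
      _ = ∑ _t : Fin T, (exp ε - 1) * ε / (exp ε - 1 + ε) / T := by
          rw [Finset.sum_const, Finset.card_univ, Fintype.card_fin, nsmul_eq_mul]
          field_simp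
  obtain ⟨t0, -, ht0⟩ :=
    Finset.exists_le_of_sum_le (Finset.univ_nonempty_iff.2 ⟨⟨0, by omega⟩⟩) havg
  exact ⟨t0, ht0.trans (div_le_one_sub_two_mul_div_sqrt hε (by exact_mod_cast hT) rfl)⟩
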